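/- arXiv:2101.02238 — 3 statements merged into one kernel-verified Lean document; each statement's English description precedes it below -/
import Mathlib

section
/- Fix M > 0 such that Λ := 2·G·Lip(V)·(M·T_max − 1 + e^{−M·T_max})/M² < 1, and suppose 0 < V_min ≤ V(c) ≤ V_max for all c ≥ 0. For F, F′ ∈ 𝒫_{m,G}, let z_F, z_{F′} denote the respective characteristic travel distances, which are invertible, and let x, x′ lie in the ranges of z_F and z_{F′}, respectively. Then |z_F^{−1}(x) − z_{F′}^{−1}(x′)| ≤ |x − x′|/V_min + e^{M·T_max}·Lip(V)/((1 − Λ)·V_min)·∫₀^{T_max} |F(S_s(z_F)) − F′(S_s(z_F))| ds. -/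
open MeasureTheory Set Filter

noncomputable section

/-- `Sset Td Xs z t` is the set `S_t(z)` of pairs (departure time, trip length) of the
agents travelling at time `t` in a system with characteristic travel distance `z`:
`S_t(z) = {(τ, ξ) : τ ∈ [0,t] ∩ 𝒯_d, ξ ∈ (z(t) − z(τ), ∞) ∩ 𝒳}`. -/
def Sset (Td Xs : Set ℝ) (z : ℝ → ℝ) (t : ℝ) : Set (ℝ × ℝ) :=
  {p : ℝ × ℝ | p.1 ∈ Set.Icc 0 t ∩ Td ∧ p.2 ∈ Set.Ioi (z t - z p.1) ∩ Xs}

/-- `memP Td Xs Ta m G F` says that `F ∈ 𝒫_{m,G}`: `F` is a Borel probability measure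
on `𝒯_d × 𝒳` with `F(B) ≤ G·λ₂(B)` for every Borel `B` and whose `𝒳`-marginal agrees
with that of the demand profile `m`, i.e. `F(𝒯_d × Q) = m(Q × 𝒯_a)` for all Borel `Q`. -/
def memP (Td Xs Ta : Set ℝ) (m : Measure (ℝ × ℝ)) (G : ℝ) (F : Measure (ℝ × ℝ)) : Prop :=
  IsProbabilityMeasure F ∧ F ((Td ×ˢ Xs)ᶜ) = 0 ∧
    (∀ B : Set (ℝ × ℝ), MeasurableSet B → F B ≤ ENNReal.ofReal G * volume B) ∧
    ∀ Q : Set ℝ, MeasurableSet Q → F (Td ×ˢ Q) = m (Q ×ˢ Ta)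

/-- The map `𝒰(z, F)(t) = ∫₀ᵗ V(F(S_s(z))) ds`. -/
def Umap (Td Xs : Set ℝ) (V : ℝ → ℝ) (F : Measure (ℝ × ℝ)) (z : ℝ → ℝ) (t : ℝ) : ℝ :=
  ∫ s in (0:ℝ)..t, V ((F (Sset Td Xs z s)).toReal)

/-- The distance associated with the norm `‖u‖_M = sup_{t ∈ [0,Tmax]} e^{−Mt}|u(t)|`. -/
def dM (M Tmax : ℝ) (u w : ℝ → ℝ) : ℝ :=
  ⨆ t : Set.Icc (0:ℝ) Tmax, Real.exp (-(M * t.1)) * |u t.1 - w t.1|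

/-! For a measure `F'` with density at most `G`, replacing `z` by `z'` in `S_t(·)` changes
`F'(S_t(·))` by at most `G` times the area of the strip between the curves
`τ ↦ z t − z τ` and `τ ↦ z' t − z' τ`, i.e. by `G·(t·|z t − z' t| + ∫₀ᵗ |z τ − z' τ| dτ)`.
With the Lipschitz bound on `V`, the two fixed-point equations give an iterated-integral
inequality for `w = |z_F − z_{F'}|`; at a maximiser `t₀` of `e^{−Mt} w(t)` it reads
`A ≤ Lip(V)·I + Λ·A`, where `A = e^{−M t₀} w(t₀)` and `I` is the integral in the claim, whence
`w ≤ e^{M·Tmax} Lip(V) I / (1 − Λ)`. Since `z_{F'}` grows with speed at least `Vmin`,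
`Vmin·|t − t'| ≤ |z_{F'}(t) − z_{F'}(t')| ≤ w(t) + |x − x'|`. -/

open Real

lemma monotoneOn_sub_one_add_exp_neg : MonotoneOn (fun u : ℝ => u - 1 + exp (-u)) (Ici 0) := by
  refine monotoneOn_of_hasDerivWithinAt_nonneg (convex_Ici 0) (by fun_prop)
    (fun u _ => ?_) (fun u hu => ?_) (f' := fun u => 1 - exp (-u))
  · exact ((((hasDerivAt_id u).sub_const 1).add (hasDerivAt_neg u).exp).congr_deriv
      (by simp only [mul_neg, mul_one]; ring)).hasDerivWithinAt
  · rw [interior_Ici] at hu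
    simpa using exp_le_one_iff.mpr (neg_nonpos.mpr (le_of_lt hu))

lemma mul_one_sub_exp_neg_le {u : ℝ} (hu : 0 ≤ u) :
    u * (1 - exp (-u)) ≤ 2 * (u - 1 + exp (-u)) := by
  suffices MonotoneOn (fun u : ℝ => (u + 2) * exp (-u) + u - 2) (Ici 0) by
    have := this self_mem_Ici hu hu
    simp only [zero_add, neg_zero, exp_zero, mul_one, add_zero, sub_self, sub_nonneg] at this
    linarith
  refine monotoneOn_of_hasDerivWithinAt_nonneg (convex_Ici 0) (by fun_prop)
    (fun u _ => ?_) (fun u hu => ?_) (f' := fun u => 1 - (u + 1) * exp (-u))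
  · exact ((((((hasDerivAt_id u).add_const 2).mul (hasDerivAt_neg u).exp).add
      (hasDerivAt_id u)).sub_const 2).congr_deriv
        (by simp only [one_mul, id_eq, mul_neg, mul_one]; ring)).hasDerivWithinAt
  · have := add_one_le_exp u
    have h : exp u * exp (-u) = 1 := by rw [← exp_add, add_neg_cancel, exp_zero]
    nlinarith [exp_pos (-u)]

lemma exp_neg_mul_mul_exp_sub_one_div_le {M t T : ℝ} (hM : 0 < M) (ht : t ∈ Icc 0 T) :
    exp (-(M * t)) * (t * (exp (M * t) - 1) / M) ≤ 2 * (M * T - 1 + exp (-(M * T))) / M ^ 2 := by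
  have hMt : 0 ≤ M * t := mul_nonneg hM.le ht.1
  have hsplit : exp (-(M * t)) * (t * (exp (M * t) - 1) / M)
      = M * t * (1 - exp (-(M * t))) / M ^ 2 := by
    rw [exp_neg]
    field_simp
  rw [hsplit]
  gcongr ?_ / _
  calc M * t * (1 - exp (-(M * t))) ≤ 2 * (M * t - 1 + exp (-(M * t))) :=
        mul_one_sub_exp_neg_le hMt
    _ ≤ 2 * (M * T - 1 + exp (-(M * T))) := by
        have hMT : M * t ≤ M * T := by gcongr; exact ht.2
        gcongr 2 * ?_
        exact monotoneOn_sub_one_add_exp_neg hMt (hMt.trans hMT) hMT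

lemma integral_exp_mul {M : ℝ} (hM : M ≠ 0) (t : ℝ) :
    ∫ s in (0:ℝ)..t, exp (M * s) = (exp (M * t) - 1) / M := by
  rw [intervalIntegral.integral_comp_mul_left _ hM, integral_exp, mul_zero, exp_zero,
    smul_eq_mul, inv_mul_eq_div]

lemma integral_mul_exp_add_exp_sub_one_div {M : ℝ} (hM : M ≠ 0) (t : ℝ) :
    ∫ s in (0:ℝ)..t, (s * exp (M * s) + (exp (M * s) - 1) / M) = t * (exp (M * t) - 1) / M := by
  have hderiv : ∀ s ∈ uIcc 0 t, HasDerivAt (fun s => s * (exp (M * s) - 1) / M)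
      (s * exp (M * s) + (exp (M * s) - 1) / M) s := fun s _ => by
    refine ((((hasDerivAt_id s).mul
      ((((hasDerivAt_id s).const_mul M).exp).sub_const 1))).div_const M).congr_deriv ?_
    field_simp
    simp only [id_eq]
    ring
  rw [intervalIntegral.integral_eq_sub_of_hasDerivAt hderiv
    ((Continuous.intervalIntegrable (by fun_prop)) 0 t)]
  simp

lemma integral_iterated_le_of_le_exp_mul {w : ℝ → ℝ} {A M t : ℝ} (hw : Continuous w)
    (hM : M ≠ 0) (ht : 0 ≤ t) (hwA : ∀ s ∈ Icc 0 t, w s ≤ exp (M * s) * A) :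
    ∫ s in (0:ℝ)..t, (s * w s + ∫ τ in (0:ℝ)..s, w τ) ≤ A * (t * (exp (M * t) - 1) / M) := by
  have hinner : ∀ s ∈ Icc 0 t, s * w s + ∫ τ in (0:ℝ)..s, w τ
      ≤ A * (s * exp (M * s) + (exp (M * s) - 1) / M) := fun s hs => by
    have hint : ∫ τ in (0:ℝ)..s, w τ ≤ ∫ τ in (0:ℝ)..s, exp (M * τ) * A :=
      intervalIntegral.integral_mono_on hs.1 (hw.intervalIntegrable _ _)
        ((Continuous.intervalIntegrable (by fun_prop)) _ _)
        fun τ hτ => hwA τ ⟨hτ.1, hτ.2.trans hs.2⟩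
    rw [intervalIntegral.integral_mul_const, integral_exp_mul hM] at hint
    nlinarith [mul_le_mul_of_nonneg_left (hwA s hs) hs.1]
  have hcont : Continuous fun s => s * w s + ∫ τ in (0:ℝ)..s, w τ :=
    (continuous_id.mul hw).add
      (intervalIntegral.continuous_primitive (fun _ _ => hw.intervalIntegrable _ _) 0)
  calc _ ≤ ∫ s in (0:ℝ)..t, A * (s * exp (M * s) + (exp (M * s) - 1) / M) :=
        intervalIntegral.integral_mono_on ht (hcont.intervalIntegrable _ _)
          ((Continuous.intervalIntegrable (by fun_prop)) _ _) hinner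
    _ = A * (t * (exp (M * t) - 1) / M) := by
        rw [intervalIntegral.integral_const_mul, integral_mul_exp_add_exp_sub_one_div hM]

lemma le_exp_mul_div_of_le_add_iterated_integral {w : ℝ → ℝ} {C K M T Λ : ℝ}
    (hw : Continuous w) (hw0 : ∀ t ∈ Icc 0 T, 0 ≤ w t) (hK : 0 ≤ K) (hM : 0 < M)
    (hKΛ : 2 * K * (M * T - 1 + exp (-(M * T))) / M ^ 2 ≤ Λ) (hΛ : Λ < 1)
    (hle : ∀ t ∈ Icc 0 T, w t ≤ C + K * ∫ s in (0:ℝ)..t, (s * w s + ∫ τ in (0:ℝ)..s, w τ)) :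
    ∀ t ∈ Icc 0 T, w t ≤ exp (M * T) * C / (1 - Λ) := by
  intro t ht
  have hT : 0 ≤ T := ht.1.trans ht.2
  obtain ⟨t₀, ht₀, hmax⟩ := isCompact_Icc.exists_isMaxOn (nonempty_Icc.2 hT)
    (by fun_prop : Continuous fun s => exp (-(M * s)) * w s).continuousOn
  set A := exp (-(M * t₀)) * w t₀ with hA_def
  have hA0 : 0 ≤ A := mul_nonneg (exp_pos _).le (hw0 t₀ ht₀)
  have hwA : ∀ s ∈ Icc 0 T, w s ≤ exp (M * s) * A := fun s hs => by
    have : exp (-(M * s)) * w s ≤ A := hmax hs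
    rwa [exp_neg, inv_mul_le_iff₀ (exp_pos _)] at this
  have hC : 0 ≤ C := (hw0 0 ⟨le_rfl, hT⟩).trans (by simpa using hle 0 ⟨le_rfl, hT⟩)
  have houter := integral_iterated_le_of_le_exp_mul hw hM.ne' ht₀.1
    fun s hs => hwA s ⟨hs.1, hs.2.trans ht₀.2⟩
  have hweight := exp_neg_mul_mul_exp_sub_one_div_le hM ht₀
  have hAΛ : A ≤ C + Λ * A := by
    have hexp_le : exp (-(M * t₀)) ≤ 1 := exp_le_one_iff.2 (by nlinarith [ht₀.1])
    calc A ≤ exp (-(M * t₀)) * (C + K * (A * (t₀ * (exp (M * t₀) - 1) / M))) := by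
          rw [hA_def]
          gcongr
          exact (hle t₀ ht₀).trans (by gcongr)
      _ = exp (-(M * t₀)) * C + K * A * (exp (-(M * t₀)) * (t₀ * (exp (M * t₀) - 1) / M)) := by
          ring
      _ ≤ 1 * C + K * A * (2 * (M * T - 1 + exp (-(M * T))) / M ^ 2) := by gcongr
      _ = C + 2 * K * (M * T - 1 + exp (-(M * T))) / M ^ 2 * A := by ring
      _ ≤ C + Λ * A := by gcongr
  have hAC : A ≤ C / (1 - Λ) := by
    rw [le_div_iff₀ (by linarith)]
    linarith
  calc w t ≤ exp (M * t) * A := hwA t ht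
    _ ≤ exp (M * T) * (C / (1 - Λ)) := by
        gcongr
        exact ht.2
    _ = exp (M * T) * C / (1 - Λ) := by ring

lemma measurableSet_setOf_mem_Sset {Td Xs : Set ℝ} (hTd : MeasurableSet Td)
    (hXs : MeasurableSet Xs) {z : ℝ → ℝ} (hz : Measurable z) :
    MeasurableSet {q : ℝ × (ℝ × ℝ) | q.2 ∈ Sset Td Xs z q.1} := by
  simp only [Sset, mem_ofPred_eq, mem_inter_iff, mem_Icc, mem_Ioi]
  refine (((measurableSet_le measurable_const measurable_snd.fst).inter
    (measurableSet_le measurable_snd.fst measurable_fst)).inter (measurable_snd.fst hTd)).inter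
    ((measurableSet_lt ((hz.comp measurable_fst).sub (hz.comp measurable_snd.fst))
      measurable_snd.snd).inter (measurable_snd.snd hXs))

lemma measurableSet_Sset {Td Xs : Set ℝ} (hTd : MeasurableSet Td) (hXs : MeasurableSet Xs)
    {z : ℝ → ℝ} (hz : Measurable z) (t : ℝ) : MeasurableSet (Sset Td Xs z t) :=
  measurable_prodMk_left (measurableSet_setOf_mem_Sset hTd hXs hz)

lemma measurable_measure_Sset {Td Xs : Set ℝ} (hTd : MeasurableSet Td) (hXs : MeasurableSet Xs)
    {z : ℝ → ℝ} (hz : Measurable z) (F : Measure (ℝ × ℝ)) [SFinite F] :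
    Measurable fun t => F (Sset Td Xs z t) :=
  measurable_measure_prodMk_left (measurableSet_setOf_mem_Sset hTd hXs hz)

lemma volume_region_between_oc_eq_lintegral {α : Type*} [MeasurableSpace α] {μ : Measure α}
    {f g : α → ℝ} (hf : Measurable f) (hg : Measurable g) {s : Set α} (hs : MeasurableSet s) :
    μ.prod volume {p : α × ℝ | p.1 ∈ s ∧ p.2 ∈ Ioc (f p.1) (g p.1)}
      = ∫⁻ x in s, ENNReal.ofReal (g x - f x) ∂μ := by
  classical
  rw [Measure.prod_apply (measurableSet_region_between_oc hf hg hs),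
    ← lintegral_indicator hs]
  congr with x
  by_cases hx : x ∈ s
  · rw [indicator_of_mem hx, ← Real.volume_Ioc]
    congr 1 with y
    simp [hx]
  · rw [indicator_of_notMem hx]
    simp [hx]

lemma Sset_sdiff_subset (Td Xs : Set ℝ) (z z' : ℝ → ℝ) (t : ℝ) :
    Sset Td Xs z t \ Sset Td Xs z' t ⊆ {p : ℝ × ℝ | p.1 ∈ Icc 0 t ∧
      p.2 ∈ Ioc (z t - z p.1) (z t - z p.1 + (|z t - z' t| + |z p.1 - z' p.1|))} := by
  rintro p ⟨⟨⟨hp1, hpTd⟩, hp2, hpXs⟩, hp'⟩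
  have hle : p.2 ≤ z' t - z' p.1 := not_lt.1 fun h => hp' ⟨⟨hp1, hpTd⟩, h, hpXs⟩
  refine ⟨hp1, hp2, hle.trans ?_⟩
  linarith [le_abs_self (z' t - z t), le_abs_self (z p.1 - z' p.1), abs_sub_comm (z t) (z' t)]

lemma toReal_measure_Sset_le_add {Td Xs : Set ℝ} (hTd : MeasurableSet Td)
    (hXs : MeasurableSet Xs) {z z' : ℝ → ℝ} (hz : Continuous z) (hz' : Continuous z')
    {F : Measure (ℝ × ℝ)} [IsFiniteMeasure F] {G : ℝ} (hG : 0 ≤ G)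
    (hFG : ∀ B : Set (ℝ × ℝ), MeasurableSet B → F B ≤ ENNReal.ofReal G * volume B)
    {t : ℝ} (ht : 0 ≤ t) :
    (F (Sset Td Xs z t)).toReal
      ≤ (F (Sset Td Xs z' t)).toReal + G * (t * |z t - z' t| + ∫ τ in (0:ℝ)..t, |z τ - z' τ|) := by
  have hcont : Continuous fun τ => |z t - z' t| + |z τ - z' τ| := by fun_prop
  have hint : ∫ τ in (0:ℝ)..t, (|z t - z' t| + |z τ - z' τ|)
      = t * |z t - z' t| + ∫ τ in (0:ℝ)..t, |z τ - z' τ| := by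
    rw [intervalIntegral.integral_add intervalIntegrable_const
      (Continuous.intervalIntegrable (by fun_prop) _ _), intervalIntegral.integral_const,
      smul_eq_mul, sub_zero]
  have hvol := volume_region_between_oc_eq_lintegral (μ := volume) (s := Icc 0 t)
    (f := fun τ => z t - z τ) (g := fun τ => z t - z τ + (|z t - z' t| + |z τ - z' τ|))
    (by fun_prop) (by fun_prop) measurableSet_Icc
  simp only [← Measure.volume_eq_prod, add_sub_cancel_left] at hvol
  rw [← ofReal_integral_eq_lintegral_ofReal hcont.integrableOn_Icc
    (ae_of_all _ fun τ => by positivity), integral_Icc_eq_integral_Ioc,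
    ← intervalIntegral.integral_of_le ht, hint] at hvol
  have hdiff : F (Sset Td Xs z t \ Sset Td Xs z' t)
      ≤ ENNReal.ofReal (G * (t * |z t - z' t| + ∫ τ in (0:ℝ)..t, |z τ - z' τ|)) :=
    calc _ ≤ ENNReal.ofReal G * volume (Sset Td Xs z t \ Sset Td Xs z' t) :=
          hFG _ ((measurableSet_Sset hTd hXs hz.measurable t).diff
            (measurableSet_Sset hTd hXs hz'.measurable t))
      _ ≤ ENNReal.ofReal G
            * ENNReal.ofReal (t * |z t - z' t| + ∫ τ in (0:ℝ)..t, |z τ - z' τ|) := by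
          rw [← hvol]
          gcongr
          exact Sset_sdiff_subset Td Xs z z' t
      _ = _ := (ENNReal.ofReal_mul hG).symm
  have hJ : 0 ≤ ∫ τ in (0:ℝ)..t, (|z t - z' t| + |z τ - z' τ|) :=
    intervalIntegral.integral_nonneg ht fun τ _ => by positivity
  rw [hint] at hJ
  have hreal := ENNReal.toReal_le_of_le_ofReal (mul_nonneg hG hJ) hdiff
  have hsdiff := le_measureReal_sdiff (μ := F) (s₁ := Sset Td Xs z t) (s₂ := Sset Td Xs z' t)
  simp only [measureReal_def] at hsdiff
  linarith

lemma abs_toReal_measure_Sset_sub_le {Td Xs : Set ℝ} (hTd : MeasurableSet Td)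
    (hXs : MeasurableSet Xs) {z z' : ℝ → ℝ} (hz : Continuous z) (hz' : Continuous z')
    {F : Measure (ℝ × ℝ)} [IsFiniteMeasure F] {G : ℝ} (hG : 0 ≤ G)
    (hFG : ∀ B : Set (ℝ × ℝ), MeasurableSet B → F B ≤ ENNReal.ofReal G * volume B)
    {t : ℝ} (ht : 0 ≤ t) :
    |(F (Sset Td Xs z t)).toReal - (F (Sset Td Xs z' t)).toReal|
      ≤ G * (t * |z t - z' t| + ∫ τ in (0:ℝ)..t, |z τ - z' τ|) := by
  have h₁ := toReal_measure_Sset_le_add hTd hXs hz hz' hG hFG ht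
  have h₂ := toReal_measure_Sset_le_add hTd hXs hz' hz hG hFG ht
  simp only [abs_sub_comm (z' _) (z _)] at h₂
  rw [abs_sub_le_iff]
  constructor <;> linarith

lemma intervalIntegrable_toReal_measure_Sset {Td Xs : Set ℝ} (hTd : MeasurableSet Td)
    (hXs : MeasurableSet Xs) {z : ℝ → ℝ} (hz : Measurable z) (F : Measure (ℝ × ℝ))
    [IsFiniteMeasure F] (a b : ℝ) :
    IntervalIntegrable (fun t => (F (Sset Td Xs z t)).toReal) volume a b :=
  IntervalIntegrable.mono_fun' (g := fun _ => F.real univ) intervalIntegrable_const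
    (measurable_measure_Sset hTd hXs hz F).ennreal_toReal.aestronglyMeasurable
    (ae_of_all _ fun _ => (Real.norm_of_nonneg ENNReal.toReal_nonneg).trans_le
      (measureReal_mono (subset_univ _)))

lemma intervalIntegrable_comp_toReal_measure_Sset {Td Xs : Set ℝ} (hTd : MeasurableSet Td)
    (hXs : MeasurableSet Xs) {V : ℝ → ℝ} {LV : NNReal} (hV : LipschitzOnWith LV V (Ici 0))
    {z : ℝ → ℝ} (hz : Measurable z) (F : Measure (ℝ × ℝ)) [IsFiniteMeasure F] (a b : ℝ) :
    IntervalIntegrable (fun t => V (F (Sset Td Xs z t)).toReal) volume a b := by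
  -- `V` is only Lipschitz on `[0, ∞)`; `c ↦ V (max c 0)` is a continuous extension.
  have hVc : Continuous fun c => V (max c 0) :=
    hV.continuousOn.comp_continuous (by fun_prop) fun c => le_max_right c 0
  refine IntervalIntegrable.mono_fun'
    (g := fun t => |V 0| + LV * (F (Sset Td Xs z t)).toReal)
    (intervalIntegrable_const.add
      ((intervalIntegrable_toReal_measure_Sset hTd hXs hz F a b).const_mul _))
    ?_ (ae_of_all _ fun t => ?_)
  · have hmax : (fun t => V (F (Sset Td Xs z t)).toReal)
        = (fun c => V (max c 0)) ∘ fun t => (F (Sset Td Xs z t)).toReal :=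
      funext fun t => by rw [Function.comp_apply, max_eq_left ENNReal.toReal_nonneg]
    rw [hmax]
    exact (hVc.measurable.comp
      (measurable_measure_Sset hTd hXs hz F).ennreal_toReal).aestronglyMeasurable
  · have h := hV.dist_le_mul _ (mem_Ici.2 (ENNReal.toReal_nonneg (a := F (Sset Td Xs z t))))
      _ (mem_Ici.2 le_rfl)
    rw [Real.dist_eq, Real.dist_eq, sub_zero, abs_of_nonneg ENNReal.toReal_nonneg] at h
    simp only [Real.norm_eq_abs]
    linarith [abs_sub_abs_le_abs_sub (V (F (Sset Td Xs z t)).toReal) (V 0)]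

lemma abs_comp_toReal_measure_Sset_sub_le {Td Xs : Set ℝ} (hTd : MeasurableSet Td)
    (hXs : MeasurableSet Xs) {V : ℝ → ℝ} {LV : NNReal} (hV : LipschitzOnWith LV V (Ici 0))
    {z z' : ℝ → ℝ} (hz : Continuous z) (hz' : Continuous z') (F : Measure (ℝ × ℝ))
    {F' : Measure (ℝ × ℝ)} [IsFiniteMeasure F'] {G : ℝ} (hG : 0 ≤ G)
    (hF'G : ∀ B : Set (ℝ × ℝ), MeasurableSet B → F' B ≤ ENNReal.ofReal G * volume B)
    {t : ℝ} (ht : 0 ≤ t) :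
    |V (F (Sset Td Xs z t)).toReal - V (F' (Sset Td Xs z' t)).toReal|
      ≤ LV * |(F (Sset Td Xs z t)).toReal - (F' (Sset Td Xs z t)).toReal|
        + LV * G * (t * |z t - z' t| + ∫ τ in (0:ℝ)..t, |z τ - z' τ|) := by
  have hlip := hV.dist_le_mul _ (mem_Ici.2 (ENNReal.toReal_nonneg (a := F (Sset Td Xs z t))))
    _ (mem_Ici.2 (ENNReal.toReal_nonneg (a := F' (Sset Td Xs z' t))))
  rw [Real.dist_eq, Real.dist_eq] at hlip
  calc _ ≤ LV * (|(F (Sset Td Xs z t)).toReal - (F' (Sset Td Xs z t)).toReal|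
        + |(F' (Sset Td Xs z t)).toReal - (F' (Sset Td Xs z' t)).toReal|) :=
        hlip.trans (by gcongr; exact abs_sub_le _ _ _)
    _ ≤ _ := by
        rw [mul_add, mul_assoc]
        gcongr
        exact abs_toReal_measure_Sset_sub_le hTd hXs hz hz' hG hF'G ht

lemma abs_sub_le_of_eq_Umap {Td Xs : Set ℝ} (hTd : MeasurableSet Td)
    (hXs : MeasurableSet Xs) {V : ℝ → ℝ} {LV : NNReal} (hV : LipschitzOnWith LV V (Ici 0))
    {z z' : ℝ → ℝ} (hz : Continuous z) (hz' : Continuous z')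
    {F F' : Measure (ℝ × ℝ)} [IsFiniteMeasure F] [IsFiniteMeasure F'] {G : ℝ} (hG : 0 ≤ G)
    (hF'G : ∀ B : Set (ℝ × ℝ), MeasurableSet B → F' B ≤ ENNReal.ofReal G * volume B) {T : ℝ}
    (hfix : ∀ t ∈ Icc (0:ℝ) T, z t = Umap Td Xs V F z t)
    (hfix' : ∀ t ∈ Icc (0:ℝ) T, z' t = Umap Td Xs V F' z' t) :
    ∀ t ∈ Icc (0:ℝ) T, |z t - z' t|
      ≤ LV * (∫ s in (0:ℝ)..T, |(F (Sset Td Xs z s)).toReal - (F' (Sset Td Xs z s)).toReal|)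
        + LV * G * ∫ s in (0:ℝ)..t, (s * |z s - z' s| + ∫ τ in (0:ℝ)..s, |z τ - z' τ|) := by
  intro t ht
  have hVF := intervalIntegrable_comp_toReal_measure_Sset hTd hXs hV hz.measurable F
  have hVF' := intervalIntegrable_comp_toReal_measure_Sset hTd hXs hV hz'.measurable F'
  have hdF : ∀ a b, IntervalIntegrable
      (fun s => |(F (Sset Td Xs z s)).toReal - (F' (Sset Td Xs z s)).toReal|) volume a b :=
    fun a b => ((intervalIntegrable_toReal_measure_Sset hTd hXs hz.measurable F a b).sub
      (intervalIntegrable_toReal_measure_Sset hTd hXs hz.measurable F' a b)).abs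
  have hrest : Continuous fun s => s * |z s - z' s| + ∫ τ in (0:ℝ)..s, |z τ - z' τ| :=
    (continuous_id.mul (hz.sub hz').abs).add (intervalIntegral.continuous_primitive
      (fun _ _ => (hz.sub hz').abs.intervalIntegrable _ _) 0)
  calc |z t - z' t|
      = |∫ s in (0:ℝ)..t, (V (F (Sset Td Xs z s)).toReal - V (F' (Sset Td Xs z' s)).toReal)| := by
        rw [hfix t ht, hfix' t ht, Umap, Umap, intervalIntegral.integral_sub (hVF _ _) (hVF' _ _)]
    _ ≤ ∫ s in (0:ℝ)..t,
          |V (F (Sset Td Xs z s)).toReal - V (F' (Sset Td Xs z' s)).toReal| :=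
        intervalIntegral.abs_integral_le_integral_abs ht.1
    _ ≤ ∫ s in (0:ℝ)..t, (LV * |(F (Sset Td Xs z s)).toReal - (F' (Sset Td Xs z s)).toReal|
          + LV * G * (s * |z s - z' s| + ∫ τ in (0:ℝ)..s, |z τ - z' τ|)) :=
        intervalIntegral.integral_mono_on ht.1 ((hVF _ _).sub (hVF' _ _)).abs
          (((hdF _ _).const_mul _).add ((hrest.intervalIntegrable _ _).const_mul _))
          fun s hs => abs_comp_toReal_measure_Sset_sub_le hTd hXs hV hz hz' F hG hF'G hs.1
    _ = LV * (∫ s in (0:ℝ)..t, |(F (Sset Td Xs z s)).toReal - (F' (Sset Td Xs z s)).toReal|)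
          + LV * G * ∫ s in (0:ℝ)..t, (s * |z s - z' s| + ∫ τ in (0:ℝ)..s, |z τ - z' τ|) := by
        rw [intervalIntegral.integral_add ((hdF _ _).const_mul _)
          ((hrest.intervalIntegrable _ _).const_mul _), intervalIntegral.integral_const_mul,
          intervalIntegral.integral_const_mul]
    _ ≤ _ := by
        gcongr
        exact intervalIntegral.integral_mono_interval le_rfl ht.1 ht.2
          (ae_of_all _ fun _ => abs_nonneg _) (hdF _ _)

lemma mul_abs_sub_le_abs_sub_of_eq_integral {f z : ℝ → ℝ} {c T : ℝ}
    (hf : ∀ a b, IntervalIntegrable f volume a b) (hfc : ∀ s, c ≤ f s)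
    (hz : ∀ t ∈ Icc (0:ℝ) T, z t = ∫ s in (0:ℝ)..t, f s) {t t' : ℝ}
    (ht : t ∈ Icc (0:ℝ) T) (ht' : t' ∈ Icc (0:ℝ) T) :
    c * |t - t'| ≤ |z t - z t'| := by
  wlog h : t ≤ t' generalizing t t'
  · rw [abs_sub_comm t, abs_sub_comm (z t)]
    exact this ht' ht (le_of_not_ge h)
  have hinc : c * (t' - t) ≤ z t' - z t := by
    rw [hz t' ht', hz t ht, intervalIntegral.integral_interval_sub_left (hf 0 t') (hf 0 t)]
    simpa [mul_comm] using intervalIntegral.integral_mono_on h intervalIntegrable_const (hf t t')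
      fun s _ => hfc s
  rw [abs_sub_comm t, abs_of_nonneg (sub_nonneg.2 h), abs_sub_comm]
  exact hinc.trans (le_abs_self _)

theorem characteristic_travel_distance_inverse_joint_modulus_general
    (Tmax Xmin Xmax G : ℝ)
    (hG : 0 < G)
    (Td Ta : Set ℝ) (hTdc : IsCompact Td)
    (m : Measure (ℝ × ℝ))
    (V : ℝ → ℝ) (LV : NNReal) (hV : LipschitzOnWith LV V (Set.Ici 0))
    (Vmin Vmax : ℝ) (hVmin : 0 < Vmin)
    (hVbd : ∀ c : ℝ, 0 ≤ c → Vmin ≤ V c ∧ V c ≤ Vmax)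
    (M : ℝ) (hM : 0 < M)
    (hΛ : 2 * G * (LV : ℝ) * (M * Tmax - 1 + Real.exp (-(M * Tmax))) / M ^ 2 < 1)
    (F F' : Measure (ℝ × ℝ))
    (hF : memP Td (Set.Icc Xmin Xmax) Ta m G F)
    (hF' : memP Td (Set.Icc Xmin Xmax) Ta m G F')
    (zF zF' : ℝ → ℝ) (hzF : Continuous zF) (hzF' : Continuous zF')
    (hfix : ∀ t ∈ Set.Icc (0:ℝ) Tmax, zF t = Umap Td (Set.Icc Xmin Xmax) V F zF t)
    (hfix' : ∀ t ∈ Set.Icc (0:ℝ) Tmax, zF' t = Umap Td (Set.Icc Xmin Xmax) V F' zF' t)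
    (x x' t t' : ℝ) (ht : t ∈ Set.Icc (0:ℝ) Tmax) (ht' : t' ∈ Set.Icc (0:ℝ) Tmax)
    (hx : zF t = x) (hx' : zF' t' = x') :
    |t - t'|
      ≤ |x - x'| / Vmin
        + Real.exp (M * Tmax) * (LV : ℝ) /
            ((1 - 2 * G * (LV : ℝ) * (M * Tmax - 1 + Real.exp (-(M * Tmax))) / M ^ 2)
              * Vmin)
          * ∫ s in (0:ℝ)..Tmax,
              |(F (Sset Td (Set.Icc Xmin Xmax) zF s)).toReal
                - (F' (Sset Td (Set.Icc Xmin Xmax) zF s)).toReal| := by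
  obtain ⟨hFprob, -, -, -⟩ := hF
  obtain ⟨hF'prob, -, hF'G, -⟩ := hF'
  set Λ := 2 * G * (LV : ℝ) * (M * Tmax - 1 + Real.exp (-(M * Tmax))) / M ^ 2
  set I := ∫ s in (0:ℝ)..Tmax,
    |(F (Sset Td (Set.Icc Xmin Xmax) zF s)).toReal - (F' (Sset Td (Set.Icc Xmin Xmax) zF s)).toReal|
  have hdist : |zF t - zF' t| ≤ Real.exp (M * Tmax) * (LV * I) / (1 - Λ) :=
    le_exp_mul_div_of_le_add_iterated_integral (w := fun s => |zF s - zF' s|) (by fun_prop)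
      (fun _ _ => abs_nonneg _) (by positivity) hM (le_of_eq (by ring)) hΛ
      (abs_sub_le_of_eq_Umap hTdc.measurableSet measurableSet_Icc hV hzF hzF' hG.le hF'G hfix
        hfix') t ht
  have hspeed : Vmin * |t - t'| ≤ |zF' t - zF' t'| :=
    mul_abs_sub_le_abs_sub_of_eq_integral
      (intervalIntegrable_comp_toReal_measure_Sset hTdc.measurableSet measurableSet_Icc hV
        hzF'.measurable F')
      (fun _ => (hVbd _ ENNReal.toReal_nonneg).1) hfix' ht ht'
  have htri : |zF' t - zF' t'| ≤ |zF t - zF' t| + |x - x'| := by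
    rw [← hx, ← hx', abs_sub_comm (zF t) (zF' t)]
    exact abs_sub_le _ _ _
  have h1Λ : 0 < 1 - Λ := sub_pos.2 hΛ
  calc |t - t'| ≤ (|x - x'| + Real.exp (M * Tmax) * (LV * I) / (1 - Λ)) / Vmin := by
        rw [le_div_iff₀ hVmin]
        linarith
    _ = _ := by
        field_simp

/-- proof of Proposition 5: joint modulus of continuity of
`(x, F) ↦ z_F⁻¹(x)`. Under `Λ < 1` and `0 < Vmin ≤ V ≤ Vmax`, if `x = z_F(t)` and
`x′ = z_{F′}(t′)` lie in the ranges of the characteristic travel distances (so that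
`t = z_F⁻¹(x)` and `t′ = z_{F′}⁻¹(x′)`), then
`|z_F⁻¹(x) − z_{F′}⁻¹(x′)| ≤ |x − x′|/Vmin
  + e^{M·Tmax}·Lip(V)/((1 − Λ)·Vmin)·∫₀^{Tmax} |F(S_s(z_F)) − F′(S_s(z_F))| ds`. -/
theorem characteristic_travel_distance_inverse_joint_modulus
    (Tmax Xmin Xmax G : ℝ) (hT : 0 < Tmax) (hXmin : 0 < Xmin) (hXX : Xmin < Xmax)
    (hG : 0 < G)
    (Td Ta : Set ℝ) (hTdc : IsCompact Td) (hTd : Td ⊆ Set.Icc 0 Tmax)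
    (hTac : IsCompact Ta) (hTa : Ta ⊆ Set.Icc 0 Tmax)
    (m : Measure (ℝ × ℝ)) (hm : IsProbabilityMeasure m)
    (V : ℝ → ℝ) (LV : NNReal) (hV : LipschitzOnWith LV V (Set.Ici 0))
    (Vmin Vmax : ℝ) (hVmin : 0 < Vmin)
    (hVbd : ∀ c : ℝ, 0 ≤ c → Vmin ≤ V c ∧ V c ≤ Vmax)
    (M : ℝ) (hM : 0 < M)
    (hΛ : 2 * G * (LV : ℝ) * (M * Tmax - 1 + Real.exp (-(M * Tmax))) / M ^ 2 < 1)
    (F F' : Measure (ℝ × ℝ))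
    (hF : memP Td (Set.Icc Xmin Xmax) Ta m G F)
    (hF' : memP Td (Set.Icc Xmin Xmax) Ta m G F')
    (zF zF' : ℝ → ℝ) (hzF : Continuous zF) (hzF' : Continuous zF')
    (hfix : ∀ t ∈ Set.Icc (0:ℝ) Tmax, zF t = Umap Td (Set.Icc Xmin Xmax) V F zF t)
    (hfix' : ∀ t ∈ Set.Icc (0:ℝ) Tmax, zF' t = Umap Td (Set.Icc Xmin Xmax) V F' zF' t)
    (x x' t t' : ℝ) (ht : t ∈ Set.Icc (0:ℝ) Tmax) (ht' : t' ∈ Set.Icc (0:ℝ) Tmax)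
    (hx : zF t = x) (hx' : zF' t' = x') :
    |t - t'|
      ≤ |x - x'| / Vmin
        + Real.exp (M * Tmax) * (LV : ℝ) /
            ((1 - 2 * G * (LV : ℝ) * (M * Tmax - 1 + Real.exp (-(M * Tmax))) / M ^ 2)
              * Vmin)
          * ∫ s in (0:ℝ)..Tmax,
              |(F (Sset Td (Set.Icc Xmin Xmax) zF s)).toReal
                - (F' (Sset Td (Set.Icc Xmin Xmax) zF s)).toReal| :=
  characteristic_travel_distance_inverse_joint_modulus_general Tmax Xmin Xmax G hG Td Ta hTdc m V LV
    hV Vmin Vmax hVmin hVbd M hM hΛ F F' hF hF' zF zF' hzF hzF' hfix hfix' x x' t t' ht ht' hx hx'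
end
end

section
/- Let v : ℝ → (0,∞) be continuous, define z(t) := ∫₀ᵗ v(s) ds (so z is strictly increasing with a differentiable inverse z^{−1} on its range), and for a fixed trip length x > 0 define the travel time T(t, x) := z^{−1}(x + z(t)) − t on the set of t for which x + z(t) lies in the range of z. Then t ↦ T(t, x) is differentiable there and ∂ₜT(t, x) = v(t)/v(t + T(t, x)) − 1. -/
/-! The cumulative distance `z` is a primitive of the positive speed `v`, hence strictly
increasing with `z' = v`, and by the inverse function theorem `z⁻¹` has derivative `1 / v`
at `z u`. Writing the arrival time as `t + T t = z⁻¹ (x + z t)`, the chain rule gives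
`v t / v (t + T t)` as its derivative. -/

theorem Function.Injective.hasStrictDerivAt_invFun {𝕜 : Type*} [NontriviallyNormedField 𝕜]
    [CompleteSpace 𝕜] {f : 𝕜 → 𝕜} {f' a : 𝕜} (hf : Function.Injective f)
    (hfa : HasStrictDerivAt f f' a) (hf' : f' ≠ 0) :
    HasStrictDerivAt (Function.invFun f) f'⁻¹ (f a) :=
  hfa.to_local_left_inverse hf' (.of_forall (Function.leftInverse_invFun hf))

theorem strictMono_integral_of_pos {v : ℝ → ℝ} (hv : Continuous v) (hvpos : ∀ t, 0 < v t)
    (a : ℝ) : StrictMono fun t => ∫ s in a..t, v s :=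
  strictMono_of_hasDerivAt_pos (fun t => (hv.integral_hasStrictDerivAt a t).hasDerivAt) hvpos

theorem hasDerivAt_invFun_add_sub {𝕜 : Type*} [NontriviallyNormedField 𝕜] [CompleteSpace 𝕜]
    {z : 𝕜 → 𝕜} {z'₀ z'₁ x t₀ u : 𝕜} (hz : Function.Injective z) (h₀ : HasDerivAt z z'₀ t₀)
    (hu : HasStrictDerivAt z z'₁ u) (hz'₁ : z'₁ ≠ 0) (hzu : z u = x + z t₀) :
    HasDerivAt (fun t => Function.invFun z (x + z t) - t) (z'₀ / z'₁ - 1) t₀ := by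
  have hinv : HasDerivAt (Function.invFun z) z'₁⁻¹ (x + z t₀) :=
    hzu ▸ (hz.hasStrictDerivAt_invFun hu hz'₁).hasDerivAt
  have hcomp := hinv.comp t₀ (h₀.const_add x)
  rw [div_eq_inv_mul]
  exact hcomp.sub (hasDerivAt_id t₀)

theorem travel_time_hasDerivAt_general
    (v : ℝ → ℝ) (hv : Continuous v) (hvpos : ∀ t : ℝ, 0 < v t)
    (z : ℝ → ℝ) (hz : ∀ t, z t = ∫ s in (0:ℝ)..t, v s)
    (x : ℝ)
    (T : ℝ → ℝ) (hT : ∀ t, T t = Function.invFun z (x + z t) - t)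
    (t₀ : ℝ) (ht₀ : x + z t₀ ∈ Set.range z) :
    HasDerivAt T (v t₀ / v (t₀ + T t₀) - 1) t₀ := by
  obtain ⟨u, hu⟩ := ht₀
  have hzfun : z = fun t => ∫ s in (0:ℝ)..t, v s := funext hz
  have hzderiv (t : ℝ) : HasStrictDerivAt z (v t) t := hzfun ▸ hv.integral_hasStrictDerivAt 0 t
  have hzinj : Function.Injective z := hzfun ▸ (strictMono_integral_of_pos hv hvpos 0).injective
  have harrival : t₀ + T t₀ = u := by
    rw [hT, ← hu, Function.leftInverse_invFun hzinj u, add_sub_cancel]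
  rw [harrival, funext hT]
  exact hasDerivAt_invFun_add_sub hzinj (hzderiv t₀).hasDerivAt (hzderiv u) (hvpos u).ne' hu

/-- derivative of the travel time. Let `v : ℝ → (0,∞)` be continuous,
`z t = ∫₀ᵗ v(s) ds` (so `z` is strictly increasing with differentiable inverse on its
range), and for a fixed trip length `x > 0` let `T t = z⁻¹(x + z t) − t` wherever
`x + z t` lies in the range of `z`. Then `T` is differentiable at every such point and
`∂ₜT(t,x) = v(t)/v(t + T(t,x)) − 1`. -/
theorem travel_time_hasDerivAt
    (v : ℝ → ℝ) (hv : Continuous v) (hvpos : ∀ t : ℝ, 0 < v t)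
    (z : ℝ → ℝ) (hz : ∀ t, z t = ∫ s in (0:ℝ)..t, v s)
    (x : ℝ) (hx : 0 < x)
    (T : ℝ → ℝ) (hT : ∀ t, T t = Function.invFun z (x + z t) - t)
    (t₀ : ℝ) (ht₀ : x + z t₀ ∈ Set.range z) :
    HasDerivAt T (v t₀ / v (t₀ + T t₀) - 1) t₀ :=
  travel_time_hasDerivAt_general v hv hvpos z hz x T hT t₀ ht₀
end

section
/- Let v : ℝ → (0,∞) be continuous, z(t) := ∫₀ᵗ v(s) ds, and for a trip length x > 0 let T(t, x) := z^{−1}(x + z(t)) − t. Fix constants α > β > 0 and γ > 0 and a desired arrival time t_a, and define the cost J(t_d) := α·T(t_d, x) + β·max(t_a − t_d − T(t_d, x), 0) + γ·max(t_d + T(t_d, x) − t_a, 0). Suppose t_d* is an interior minimizer of J on the (compact) set of admissible departure times. Then α/(α + γ) ≤ v(t_d*)/v(t_d* + T(t_d*, x)) ≤ α/(α − β). Moreover, if t_a > t_d* + T(t_d*, x) (early arrival) then v(t_d*)/v(t_d* + T(t_d*, x)) = α/(α − β), and if t_a < t_d* + T(t_d*, x) (late arrival) then v(t_d*)/v(t_d*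 + T(t_d*, x)) = α/(α + γ). -/
open MeasureTheory Set Filter Topology Function

/-!
Since `z' = v > 0`, the arrival time `t + T t = z⁻¹ (x + z t)` is differentiable with
derivative `W = v t / v (t + T t)` by the inverse function rule. The cost is the maximum of the
early branch `α T - β (t + T - t_a)` and the late branch `α T + γ (t + T - t_a)`, whose
derivatives `(α - β) W - α < (α + γ) W - α` are ordered because `W > 0`. At a local minimum the
active branch has derivative zero; at a kink (on-time arrival) the left slope is `≤ 0` and the
right slope `≥ 0`. These sign conditions are exactly the bounds on `W`.
-/

theorem StrictMono.range_mem_nhds_of_continuous {z : ℝ → ℝ} (hmono : StrictMono z)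
    (hc : Continuous z) (s : ℝ) : range z ∈ 𝓝 (z s) :=
  mem_of_superset (Icc_mem_nhds (hmono (sub_one_lt s)) (hmono (lt_add_one s)))
    ((isPreconnected_range hc).ordConnected.out (mem_range_self _) (mem_range_self _))

theorem hasDerivAt_invFun_of_forall_hasDerivAt_pos {z v : ℝ → ℝ}
    (hz : ∀ t, HasDerivAt z (v t) t) (hv : ∀ t, 0 < v t) {y : ℝ} (hy : y ∈ range z) :
    HasDerivAt (invFun z) (v (invFun z y))⁻¹ y := by
  have hmono : StrictMono z := strictMono_of_hasDerivAt_pos hz hv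
  have hc : Continuous z := continuous_iff_continuousAt.2 fun t => (hz t).continuousAt
  obtain ⟨s, rfl⟩ := hy
  have hnhds : range z ∈ 𝓝 (z s) := hmono.range_mem_nhds_of_continuous hc s
  have hinv : ∀ t, invFun z (z t) = t := leftInverse_invFun hmono.injective
  have hcont : ContinuousAt (invFun z) (z s) := by
    refine StrictMonoOn.continuousAt_of_image_mem_nhds ?_ hnhds ?_
    · rintro _ ⟨t₁, rfl⟩ _ ⟨t₂, rfl⟩ h
      rw [hinv, hinv]
      exact hmono.lt_iff_lt.1 h
    · rw [← range_comp, show invFun z ∘ z = id from funext hinv, range_id]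
      exact univ_mem
  exact (hz _).of_local_left_inverse hcont (hv _).ne'
    (eventually_of_mem hnhds fun y hy => invFun_eq hy)

theorem hasDerivAt_travelTime {v z T : ℝ → ℝ} {x : ℝ} (hv : Continuous v)
    (hvpos : ∀ t, 0 < v t) (hz : ∀ t, z t = ∫ s in (0:ℝ)..t, v s)
    (hrange : ∀ t, x + z t ∈ range z) (hT : ∀ t, T t = invFun z (x + z t) - t) (t : ℝ) :
    HasDerivAt T (v t / v (t + T t) - 1) t := by
  have hzd : ∀ t, HasDerivAt z (v t) t := fun t => by
    rw [funext hz]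
    exact intervalIntegral.integral_hasDerivAt_right (hv.intervalIntegrable 0 t)
      (hv.stronglyMeasurableAtFilter _ _) hv.continuousAt
  have harrival : t + T t = invFun z (x + z t) := by rw [hT]; ring
  rw [harrival, funext hT, div_eq_inv_mul]
  exact ((hasDerivAt_invFun_of_forall_hasDerivAt_pos hzd hvpos (hrange t)).comp t
    ((hzd t).const_add x)).sub (hasDerivAt_id t)

section MaxOfTwo

variable {f g : ℝ → ℝ} {a f' g' : ℝ}

theorem zero_le_max_of_isLocalMin_max
    (h : IsLocalMin (fun t => max (f t) (g t)) a) (hf : HasDerivAt f f' a)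
    (hg : HasDerivAt g g' a) (hfg : f a = g a) : 0 ≤ max f' g' := by
  have hslope : Tendsto (fun t => max (slope f a t) (slope g a t)) (𝓝[>] a) (𝓝 (max f' g')) :=
    ((hasDerivAt_iff_tendsto_slope.1 hf).max (hasDerivAt_iff_tendsto_slope.1 hg)).mono_left
      (nhdsGT_le_nhdsNE a)
  refine ge_of_tendsto hslope ?_
  filter_upwards [h.filter_mono nhdsWithin_le_nhds, self_mem_nhdsWithin] with t ht (hat : a < t)
  simp only [slope_def_field, le_max_iff]
  rw [← hfg, max_self, le_max_iff] at ht
  rcases ht with ht | ht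
  · exact Or.inl (div_nonneg (sub_nonneg.2 ht) (sub_nonneg.2 hat.le))
  · exact Or.inr (div_nonneg (sub_nonneg.2 (hfg ▸ ht)) (sub_nonneg.2 hat.le))

theorem min_le_zero_of_isLocalMin_max
    (h : IsLocalMin (fun t => max (f t) (g t)) a) (hf : HasDerivAt f f' a)
    (hg : HasDerivAt g g' a) (hfg : f a = g a) : min f' g' ≤ 0 := by
  have hslope : Tendsto (fun t => min (slope f a t) (slope g a t)) (𝓝[<] a) (𝓝 (min f' g')) :=
    ((hasDerivAt_iff_tendsto_slope.1 hf).min (hasDerivAt_iff_tendsto_slope.1 hg)).mono_left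
      (nhdsLT_le_nhdsNE a)
  refine le_of_tendsto hslope ?_
  filter_upwards [h.filter_mono nhdsWithin_le_nhds, self_mem_nhdsWithin] with t ht (hta : t < a)
  simp only [slope_def_field, min_le_iff]
  rw [← hfg, max_self, le_max_iff] at ht
  rcases ht with ht | ht
  · exact Or.inl (div_nonpos_of_nonneg_of_nonpos (sub_nonneg.2 ht) (sub_nonpos.2 hta.le))
  · exact Or.inr (div_nonpos_of_nonneg_of_nonpos (sub_nonneg.2 (hfg ▸ ht)) (sub_nonpos.2 hta.le))

theorem isLocalMin_of_isLocalMin_max_of_lt (h : IsLocalMin (fun t => max (f t) (g t)) a)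
    (hf : ContinuousAt f a) (hg : ContinuousAt g a) (hgf : g a < f a) : IsLocalMin f a := by
  filter_upwards [h, (hg.sub hf).eventually (gt_mem_nhds (sub_neg.2 hgf))] with t ht hgt
  rwa [max_eq_left hgf.le, max_eq_left (sub_neg.1 hgt).le] at ht

theorem nonpos_and_nonneg_of_isLocalMin_max (h : IsLocalMin (fun t => max (f t) (g t)) a)
    (hf : HasDerivAt f f' a) (hg : HasDerivAt g g' a) (hf'g' : f' ≤ g') :
    f' ≤ 0 ∧ 0 ≤ g' := by
  rcases lt_trichotomy (f a) (g a) with hlt | heq | hgt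
  · have hg'0 : g' = 0 := (isLocalMin_of_isLocalMin_max_of_lt (by simpa only [max_comm] using h)
      hg.continuousAt hf.continuousAt hlt).hasDerivAt_eq_zero hg
    exact ⟨hg'0 ▸ hf'g', hg'0.ge⟩
  · exact ⟨min_eq_left hf'g' ▸ min_le_zero_of_isLocalMin_max h hf hg heq,
      max_eq_right hf'g' ▸ zero_le_max_of_isLocalMin_max h hf hg heq⟩
  · have hf'0 : f' = 0 := (isLocalMin_of_isLocalMin_max_of_lt h hf.continuousAt hg.continuousAt
      hgt).hasDerivAt_eq_zero hf
    exact ⟨hf'0.le, hf'0 ▸ hf'g'⟩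

end MaxOfTwo

theorem schedule_cost_eq_max {β γ : ℝ} (hβ : 0 ≤ β) (hγ : 0 ≤ γ) (α τ d ta : ℝ) :
    α * τ + β * max (ta - d - τ) 0 + γ * max (d + τ - ta) 0 =
      max (α * τ - β * (d + τ - ta)) (α * τ + γ * (d + τ - ta)) := by
  rcases le_total (d + τ - ta) 0 with h | h
  · rw [max_eq_left (by linarith), max_eq_right h, max_eq_left (by nlinarith)]
    ring
  · rw [max_eq_right (by linarith), max_eq_left h, max_eq_right (by nlinarith)]
    ring

theorem departure_optimality_of_isLocalMin {T : ℝ → ℝ} {td W α β γ ta : ℝ}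
    (hT : HasDerivAt T (W - 1) td) (hW : 0 < W) (hβ : 0 < β) (hαβ : β < α) (hγ : 0 < γ)
    (hmin : IsLocalMin
      (fun t => α * T t + β * max (ta - t - T t) 0 + γ * max (t + T t - ta) 0) td) :
    (α / (α + γ) ≤ W ∧ W ≤ α / (α - β)) ∧
      (td + T td < ta → W = α / (α - β)) ∧ (ta < td + T td → W = α / (α + γ)) := by
  have hlateness : HasDerivAt (fun t => t + T t - ta) W td :=
    (((hasDerivAt_id' td).fun_add hT).sub_const ta).congr_deriv (by ring)
  have hearly : HasDerivAt (fun t => α * T t - β * (t + T t - ta)) ((α - β) * W - α) td :=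
    ((hT.const_mul α).fun_sub (hlateness.const_mul β)).congr_deriv (by ring)
  have hlate : HasDerivAt (fun t => α * T t + γ * (t + T t - ta)) ((α + γ) * W - α) td :=
    ((hT.const_mul α).fun_add (hlateness.const_mul γ)).congr_deriv (by ring)
  have hmax : IsLocalMin (fun t => max (α * T t - β * (t + T t - ta))
      (α * T t + γ * (t + T t - ta))) td := by
    simpa only [schedule_cost_eq_max hβ.le hγ.le] using hmin
  have hslopes : (α - β) * W - α < (α + γ) * W - α := by nlinarith
  have hearly_zero : td + T td < ta → (α - β) * W - α = 0 := fun h =>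
    (isLocalMin_of_isLocalMin_max_of_lt hmax hearly.continuousAt hlate.continuousAt
      (by nlinarith)).hasDerivAt_eq_zero hearly
  have hlate_zero : ta < td + T td → (α + γ) * W - α = 0 := fun h =>
    (isLocalMin_of_isLocalMin_max_of_lt (by simpa only [max_comm] using hmax) hlate.continuousAt
      hearly.continuousAt (by nlinarith)).hasDerivAt_eq_zero hlate
  have hsigns : (α - β) * W - α ≤ 0 ∧ 0 ≤ (α + γ) * W - α :=
    nonpos_and_nonneg_of_isLocalMin_max hmax hearly hlate hslopes.le
  have hαβ' : 0 < α - β := sub_pos.2 hαβ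
  have hαγ : 0 < α + γ := by linarith
  refine ⟨⟨?_, ?_⟩, fun h => ?_, fun h => ?_⟩
  · rw [div_le_iff₀ hαγ]; linarith [hsigns.2]
  · rw [le_div_iff₀ hαβ']; linarith [hsigns.1]
  · rw [eq_div_iff hαβ'.ne']; linarith [hearly_zero h]
  · rw [eq_div_iff hαγ.ne']; linarith [hlate_zero h]

theorem departure_time_first_order_conditions_general
    (v : ℝ → ℝ) (hv : Continuous v) (hvpos : ∀ t : ℝ, 0 < v t)
    (z : ℝ → ℝ) (hz : ∀ t, z t = ∫ s in (0:ℝ)..t, v s)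
    (x : ℝ)
    (hrange : ∀ t : ℝ, x + z t ∈ Set.range z)
    (T : ℝ → ℝ) (hT : ∀ t, T t = Function.invFun z (x + z t) - t)
    (α β γ ta : ℝ) (hβ : 0 < β) (hαβ : β < α) (hγ : 0 < γ)
    (J : ℝ → ℝ)
    (hJ : ∀ td, J td = α * T td + β * max (ta - td - T td) 0 + γ * max (td + T td - ta) 0)
    (K : Set ℝ)
    (td : ℝ) (htd : td ∈ interior K) (hmin : ∀ t ∈ K, J td ≤ J t) :
    (α / (α + γ) ≤ v td / v (td + T td) ∧ v td / v (td + T td) ≤ α / (α - β)) ∧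
    (td + T td < ta → v td / v (td + T td) = α / (α - β)) ∧
    (ta < td + T td → v td / v (td + T td) = α / (α + γ)) := by
  have hlocal : IsLocalMin J td := mem_of_superset (mem_interior_iff_mem_nhds.1 htd) hmin
  rw [funext hJ] at hlocal
  exact departure_optimality_of_isLocalMin (hasDerivAt_travelTime hv hvpos hz hrange hT td)
    (div_pos (hvpos _) (hvpos _)) hβ hαβ hγ hlocal

/-- Proposition 6: first-order optimality conditions for the departure
time. Let `v : ℝ → (0,∞)` be continuous, `z t = ∫₀ᵗ v`, `T t = z⁻¹(x + z t) − t` the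
travel time of a trip of length `x > 0`, and for `α > β > 0`, `γ > 0` and a desired
arrival time `t_a`, let `J(t_d) = α·T(t_d) + β·(t_a − t_d − T(t_d))₊ + γ·(t_d + T(t_d) − t_a)₊`.
If `t_d*` is an interior minimizer of `J` on the compact admissible set `K`, then
`α/(α+γ) ≤ v(t_d*)/v(t_d* + T(t_d*)) ≤ α/(α−β)`, with equality `= α/(α−β)` for early
arrivals and `= α/(α+γ)` for late arrivals. -/
theorem departure_time_first_order_conditions
    (v : ℝ → ℝ) (hv : Continuous v) (hvpos : ∀ t : ℝ, 0 < v t)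
    (z : ℝ → ℝ) (hz : ∀ t, z t = ∫ s in (0:ℝ)..t, v s)
    (x : ℝ) (hx : 0 < x)
    (hrange : ∀ t : ℝ, x + z t ∈ Set.range z)
    (T : ℝ → ℝ) (hT : ∀ t, T t = Function.invFun z (x + z t) - t)
    (α β γ ta : ℝ) (hβ : 0 < β) (hαβ : β < α) (hγ : 0 < γ)
    (J : ℝ → ℝ)
    (hJ : ∀ td, J td = α * T td + β * max (ta - td - T td) 0 + γ * max (td + T td - ta) 0)
    (K : Set ℝ) (hK : IsCompact K)
    (td : ℝ) (htd : td ∈ interior K) (hmin : ∀ t ∈ K, J td ≤ J t) :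
    (α / (α + γ) ≤ v td / v (td + T td) ∧ v td / v (td + T td) ≤ α / (α - β)) ∧
    (td + T td < ta → v td / v (td + T td) = α / (α - β)) ∧
    (ta < td + T td → v td / v (td + T td) = α / (α + γ)) :=
  departure_time_first_order_conditions_general v hv hvpos z hz x hrange T hT α β γ ta hβ hαβ hγ J
    hJ K td htd hmin
end
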